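/- arXiv:0712.0939 — 5 statements merged into one kernel-verified Lean document; each statement's English description precedes it below -/
import Mathlib

section
/- Let w_1,…,w_n ∈ [0,1] with N := Σ_{i=1}^n w_i > 0, let θ* ∈ Θ, and let Y_1,…,Y_n be independent random variables such that Y_i has law P_{θ*} for every i with w_i > 0. Set θ̃ := Σ_{i=1}^n w_i·Y_i / N and assume θ̃ ∈ Θ almost surely. Then for every z > 0, P(N·K(θ̃, θ*) > z) ≤ 2·e^{−z}. -/
open MeasureTheory ProbabilityTheory Real BigOperators

/-! `θ ↦ K θ θ*` vanishes at `θ*` and has derivative `C θ - C θ*`, so, `C` being increasing, it is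
monotone on either side of `θ*`. By the intermediate value theorem the event `N K(θ̃, θ*) > z` is
then contained, up to `θ̃ ∉ Θ`, in `{θ₊ ≤ θ̃} ∪ {θ̃ ≤ θ₋}`, where `θ₋ ≤ θ* ≤ θ₊` solve
`N K(θ±, θ*) = z`. Each half is a Chernoff bound with exponent `t = C θ± - C θ*`: tilting the
density gives `E exp (t Y) = exp (B θ± - B θ*)`, Jensen for `x ↦ x ^ w` gives
`E exp (t w Y) ≤ exp (w (B θ± - B θ*))` for `w ∈ [0, 1]`, and independence multiplies these to
`exp (N (B θ± - B θ*))`, so each half has probability at most `exp (-N K(θ±, θ*)) = exp (-z)`. -/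

open Set
open scoped ENNReal

noncomputable def expFamilyMeasure (ν : Measure ℝ) (q C B : ℝ → ℝ) (θ : ℝ) : Measure ℝ :=
  ν.withDensity fun y => ENNReal.ofReal (q y * exp (y * C θ - B θ))

def expFamilyKL (C B : ℝ → ℝ) (θ θ₀ : ℝ) : ℝ :=
  θ * (C θ - C θ₀) - B θ + B θ₀

namespace ProbabilityTheory

section MGF

variable {Ω : Type*} [MeasurableSpace Ω] {μ : Measure Ω} {X : Ω → ℝ} {t : ℝ}

theorem mgf_withDensity_of_tilt {ρ₀ ρ₁ : Ω → ℝ≥0∞} (hX : Measurable X) (hρ₀ : Measurable ρ₀)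
    [IsProbabilityMeasure (μ.withDensity ρ₁)] {s : ℝ}
    (htilt : ∀ ω, ρ₀ ω * ENNReal.ofReal (exp (t * X ω)) = ENNReal.ofReal (exp s) * ρ₁ ω) :
    Integrable (fun ω => exp (t * X ω)) (μ.withDensity ρ₀) ∧
      mgf X (μ.withDensity ρ₀) t = exp s := by
  have hmeas : Measurable fun ω => exp (t * X ω) := (hX.const_mul t).exp
  have hlint : ∫⁻ ω, ENNReal.ofReal (exp (t * X ω)) ∂μ.withDensity ρ₀ = ENNReal.ofReal (exp s) := by
    have hρ₁ : ∫⁻ ω, ρ₁ ω ∂μ = 1 := by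
      have h := measure_univ (μ := μ.withDensity ρ₁)
      rwa [withDensity_apply _ MeasurableSet.univ, Measure.restrict_univ] at h
    rw [lintegral_withDensity_eq_lintegral_mul μ hρ₀ hmeas.ennreal_ofReal]
    simp only [Pi.mul_apply, htilt]
    rw [lintegral_const_mul' _ _ ENNReal.ofReal_ne_top, hρ₁, mul_one]
  have hnn : 0 ≤ᵐ[μ.withDensity ρ₀] fun ω => exp (t * X ω) := ae_of_all _ fun ω => (exp_pos _).le
  refine ⟨⟨hmeas.aestronglyMeasurable, ?_⟩, ?_⟩
  · rw [hasFiniteIntegral_iff_ofReal hnn, hlint]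
    exact ENNReal.ofReal_lt_top
  · rw [mgf, integral_eq_lintegral_of_nonneg_ae hnn hmeas.aestronglyMeasurable, hlint,
      ENNReal.toReal_ofReal (exp_pos _).le]

theorem mgf_mul_le_rpow [IsProbabilityMeasure μ] {w : ℝ} (hw : w ∈ Icc 0 1)
    (h_int : Integrable (fun ω => exp (t * X ω)) μ) :
    Integrable (fun ω => exp (w * t * X ω)) μ ∧ mgf X μ (w * t) ≤ mgf X μ t ^ w := by
  have h_int_w : Integrable (fun ω => exp (w * t * X ω)) μ := by
    have h0 : (0 : ℝ) ∈ integrableExpSet X μ := by simp [integrableExpSet]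
    simpa [smul_eq_mul] using (integrable_of_mem_integrableExpSet <|
      convex_integrableExpSet h0 h_int (sub_nonneg.2 hw.2) hw.1 (sub_add_cancel 1 w))
  have hpow : ∀ ω, exp (w * t * X ω) = exp (t * X ω) ^ w := fun ω => by
    rw [← exp_mul]; ring_nf
  refine ⟨h_int_w, ?_⟩
  have hjensen := (concaveOn_rpow hw.1 hw.2).le_map_integral (μ := μ)
    (continuous_rpow_const hw.1).continuousOn isClosed_Ici
    (ae_of_all _ fun ω => (exp_pos (t * X ω)).le) h_int
    (by simpa only [Function.comp_def, ← hpow] using h_int_w)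
  simpa only [mgf, hpow] using hjensen

theorem mgf_const_mul_le_rpow_of_map_eq [IsProbabilityMeasure μ] {ν : Measure ℝ}
    [IsProbabilityMeasure ν] (hX : Measurable X) {w : ℝ} (hw : w ∈ Icc 0 1)
    (hlaw : 0 < w → μ.map X = ν) (h_int : Integrable (fun y => exp (t * y)) ν) :
    Integrable (fun ω => exp (t * (w * X ω))) μ ∧
      mgf (fun ω => w * X ω) μ t ≤ mgf id ν t ^ w := by
  rcases hw.1.eq_or_lt with rfl | hw₀
  · simp
  obtain ⟨h_int_w, hle⟩ := mgf_mul_le_rpow (X := id) hw h_int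
  rw [← hlaw hw₀] at h_int_w
  have hmeas : AEStronglyMeasurable (fun y => exp (w * t * y)) (μ.map X) :=
    (measurable_const_mul _).exp.aestronglyMeasurable
  refine ⟨?_, ?_⟩
  · simpa [Function.comp_def, mul_comm, mul_left_comm] using
      (integrable_map_measure hmeas hX.aemeasurable).1 h_int_w
  · rwa [mgf_const_mul, ← mgf_id_map hX.aemeasurable, hlaw hw₀]

theorem iIndepFun.mgf_weighted_sum_le {ι : Type*} [Fintype ι] {Y : ι → Ω → ℝ}
    (hY : ∀ i, Measurable (Y i)) (hindep : iIndepFun Y μ) {ν : Measure ℝ}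
    [IsProbabilityMeasure ν] {w : ι → ℝ} (hw : ∀ i, w i ∈ Icc 0 1)
    (hlaw : ∀ i, 0 < w i → μ.map (Y i) = ν) (h_int : Integrable (fun y => exp (t * y)) ν) :
    Integrable (fun ω => exp (t * ∑ i, w i * Y i ω)) μ ∧
      mgf (fun ω => ∑ i, w i * Y i ω) μ t ≤ mgf id ν t ^ ∑ i, w i := by
  have := hindep.isProbabilityMeasure
  have hfactor i := mgf_const_mul_le_rpow_of_map_eq (hY i) (hw i) (hlaw i) h_int
  have hmeas : ∀ i, Measurable fun ω => w i * Y i ω := fun i => (hY i).const_mul (w i)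
  have hindep' : iIndepFun (fun i ω => w i * Y i ω) μ :=
    hindep.comp (fun i y => w i * y) fun i => measurable_const_mul (w i)
  have hsum : (fun ω => ∑ i, w i * Y i ω) = ∑ i, fun ω => w i * Y i ω := by
    ext ω; simp
  refine ⟨?_, ?_⟩
  · simpa only [Finset.sum_apply] using
      hindep'.integrable_exp_mul_sum (s := Finset.univ) hmeas fun i _ => (hfactor i).1
  rw [hsum, hindep'.mgf_sum hmeas, rpow_sum_of_nonneg mgf_nonneg fun i _ => (hw i).1]
  exact Finset.prod_le_prod (fun i _ => mgf_nonneg) fun i _ => (hfactor i).2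

theorem measure_ge_le_of_mgf_le [IsFiniteMeasure μ] (ht : 0 ≤ t)
    (h_int : Integrable (fun ω => exp (t * X ω)) μ) {m : ℝ} (hmgf : mgf X μ t ≤ exp m)
    (ε : ℝ) : μ {ω | ε ≤ X ω} ≤ ENNReal.ofReal (exp (m - t * ε)) := by
  rw [← ofReal_measureReal]
  refine ENNReal.ofReal_le_ofReal ((measure_ge_le_exp_mul_mgf ε ht h_int).trans ?_)
  calc exp (-t * ε) * mgf X μ t ≤ exp (-t * ε) * exp m := by gcongr
    _ = exp (m - t * ε) := by rw [← exp_add]; ring_nf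

theorem measure_le_le_of_mgf_le [IsFiniteMeasure μ] (ht : t ≤ 0)
    (h_int : Integrable (fun ω => exp (t * X ω)) μ) {m : ℝ} (hmgf : mgf X μ t ≤ exp m)
    (ε : ℝ) : μ {ω | X ω ≤ ε} ≤ ENNReal.ofReal (exp (m - t * ε)) := by
  rw [← ofReal_measureReal]
  refine ENNReal.ofReal_le_ofReal ((measure_le_le_exp_mul_mgf ε ht h_int).trans ?_)
  calc exp (-t * ε) * mgf X μ t ≤ exp (-t * ε) * exp m := by gcongr
    _ = exp (m - t * ε) := by rw [← exp_add]; ring_nf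

end MGF

section ExpFamily

variable {ν : Measure ℝ} {q C B : ℝ → ℝ} {θ₀ θ : ℝ}

theorem mgf_expFamilyMeasure (hq : Measurable q) (hq₀ : ∀ y, 0 ≤ q y)
    [IsProbabilityMeasure (expFamilyMeasure ν q C B θ)] :
    Integrable (fun y => exp ((C θ - C θ₀) * y)) (expFamilyMeasure ν q C B θ₀) ∧
      mgf id (expFamilyMeasure ν q C B θ₀) (C θ - C θ₀) = exp (B θ - B θ₀) := by
  have : IsProbabilityMeasure (ν.withDensity fun y => ENNReal.ofReal (q y * exp (y * C θ - B θ))) :=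
    ‹IsProbabilityMeasure (expFamilyMeasure ν q C B θ)›
  refine mgf_withDensity_of_tilt (ρ₁ := fun y => ENNReal.ofReal (q y * exp (y * C θ - B θ)))
    measurable_id
    (hq.mul (((measurable_id.mul_const (C θ₀)).sub_const (B θ₀)).exp)).ennreal_ofReal fun y => ?_
  change ENNReal.ofReal (q y * exp (y * C θ₀ - B θ₀)) * ENNReal.ofReal (exp ((C θ - C θ₀) * y))
    = ENNReal.ofReal (exp (B θ - B θ₀)) * ENNReal.ofReal (q y * exp (y * C θ - B θ))
  rw [← ENNReal.ofReal_mul (mul_nonneg (hq₀ y) (exp_pos _).le),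
    ← ENNReal.ofReal_mul (exp_pos _).le, mul_assoc, ← exp_add, mul_left_comm, ← exp_add]
  congr 3
  ring

variable [IsProbabilityMeasure (expFamilyMeasure ν q C B θ₀)]
  [IsProbabilityMeasure (expFamilyMeasure ν q C B θ)]
  {ι Ω : Type*} [Fintype ι] [MeasurableSpace Ω] {P : Measure Ω} {Y : ι → Ω → ℝ} {w : ι → ℝ}

theorem mgf_weighted_sum_expFamilyMeasure_le (hq : Measurable q) (hq₀ : ∀ y, 0 ≤ q y)
    (hY : ∀ i, Measurable (Y i)) (hindep : iIndepFun Y P) (hw : ∀ i, w i ∈ Icc 0 1)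
    (hlaw : ∀ i, 0 < w i → P.map (Y i) = expFamilyMeasure ν q C B θ₀) :
    Integrable (fun ω => exp ((C θ - C θ₀) * ∑ i, w i * Y i ω)) P ∧
      mgf (fun ω => ∑ i, w i * Y i ω) P (C θ - C θ₀) ≤ exp ((∑ i, w i) * (B θ - B θ₀)) := by
  obtain ⟨h_int, h_mgf⟩ :=
    mgf_expFamilyMeasure (ν := ν) (C := C) (B := B) (θ₀ := θ₀) (θ := θ) hq hq₀
  rw [mul_comm, exp_mul, ← h_mgf]
  exact hindep.mgf_weighted_sum_le hY hw hlaw h_int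

theorem measure_weighted_mean_ge_le_exp (hq : Measurable q) (hq₀ : ∀ y, 0 ≤ q y)
    (hY : ∀ i, Measurable (Y i)) (hindep : iIndepFun Y P) (hw : ∀ i, w i ∈ Icc 0 1)
    (hlaw : ∀ i, 0 < w i → P.map (Y i) = expFamilyMeasure ν q C B θ₀) (hN : 0 < ∑ i, w i)
    (hC : C θ₀ ≤ C θ) :
    P {ω | θ ≤ (∑ i, w i * Y i ω) / ∑ i, w i}
      ≤ ENNReal.ofReal (exp (-((∑ i, w i) * expFamilyKL C B θ θ₀))) := by
  have := hindep.isProbabilityMeasure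
  obtain ⟨h_int, h_mgf⟩ := mgf_weighted_sum_expFamilyMeasure_le (θ := θ) hq hq₀ hY hindep hw hlaw
  convert measure_ge_le_of_mgf_le (sub_nonneg.2 hC) h_int h_mgf ((∑ i, w i) * θ) using 2
  · simp only [le_div_iff₀ hN, mul_comm θ]
  · rw [expFamilyKL]; congr 1; ring

theorem measure_weighted_mean_le_le_exp (hq : Measurable q) (hq₀ : ∀ y, 0 ≤ q y)
    (hY : ∀ i, Measurable (Y i)) (hindep : iIndepFun Y P) (hw : ∀ i, w i ∈ Icc 0 1)
    (hlaw : ∀ i, 0 < w i → P.map (Y i) = expFamilyMeasure ν q C B θ₀) (hN : 0 < ∑ i, w i)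
    (hC : C θ ≤ C θ₀) :
    P {ω | (∑ i, w i * Y i ω) / ∑ i, w i ≤ θ}
      ≤ ENNReal.ofReal (exp (-((∑ i, w i) * expFamilyKL C B θ θ₀))) := by
  have := hindep.isProbabilityMeasure
  obtain ⟨h_int, h_mgf⟩ := mgf_weighted_sum_expFamilyMeasure_le (θ := θ) hq hq₀ hY hindep hw hlaw
  convert measure_le_le_of_mgf_le (sub_nonpos.2 hC) h_int h_mgf ((∑ i, w i) * θ) using 2
  · simp only [div_le_iff₀ hN, mul_comm θ]
  · rw [expFamilyKL]; congr 1; ring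

end ExpFamily

theorem measure_mem_and_lt_le_of_monotoneOn {α Ω : Type*} [TopologicalSpace α]
    [LinearOrder α] [MeasurableSpace Ω] {P : Measure Ω} {T : Ω → α} {D : Set α} {G : α → ℝ}
    (hD : IsPreconnected D) (hGc : ContinuousOn G D) (hG : MonotoneOn G D) {x₀ : α}
    (hx₀ : x₀ ∈ D) {z : ℝ} (hz : G x₀ ≤ z) {b : ℝ≥0∞}
    (htail : ∀ x ∈ D, G x = z → P {ω | x ≤ T ω} ≤ b) :
    P {ω | T ω ∈ D ∧ z < G (T ω)} ≤ b := by
  by_cases hexceed : ∃ x₁ ∈ D, z < G x₁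
  · obtain ⟨x₁, hx₁, hzx₁⟩ := hexceed
    obtain ⟨x, hx, hGx⟩ := hD.intermediate_value hx₀ hx₁ hGc ⟨hz, hzx₁.le⟩
    refine (measure_mono fun ω (hω : T ω ∈ D ∧ z < G (T ω)) => ?_).trans (htail x hx hGx)
    change x ≤ T ω
    by_contra! hTx
    exact (hG hω.1 hx hTx.le).not_gt (hGx ▸ hω.2)
  · push Not at hexceed
    rw [show {ω | T ω ∈ D ∧ z < G (T ω)} = ∅ from
      eq_empty_of_forall_notMem fun ω hω => (hexceed _ hω.1).not_gt hω.2]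
    simp

theorem measure_lt_le_add_of_monotoneOn_of_antitoneOn {Ω : Type*} [MeasurableSpace Ω]
    {P : Measure Ω} {T : Ω → ℝ} {s : Set ℝ} {G : ℝ → ℝ} (hs : Convex ℝ s)
    (hGc : ContinuousOn G s) {x₀ : ℝ} (hx₀ : x₀ ∈ s) (hmono : MonotoneOn G (s ∩ Ici x₀))
    (hanti : AntitoneOn G (s ∩ Iic x₀)) (hT : ∀ᵐ ω ∂P, T ω ∈ s) {z : ℝ} (hz : G x₀ ≤ z)
    {b b' : ℝ≥0∞} (hupper : ∀ x ∈ s ∩ Ici x₀, G x = z → P {ω | x ≤ T ω} ≤ b)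
    (hlower : ∀ x ∈ s ∩ Iic x₀, G x = z → P {ω | T ω ≤ x} ≤ b') :
    P {ω | z < G (T ω)} ≤ b + b' := by
  have hsplit : {ω | z < G (T ω)} ≤ᵐ[P]
      ({ω | T ω ∈ s ∩ Ici x₀ ∧ z < G (T ω)} ∪ {ω | T ω ∈ s ∩ Iic x₀ ∧ z < G (T ω)} : Set Ω) := by
    filter_upwards [hT] with ω hω hzω
    rcases le_total x₀ (T ω) with h | h
    · exact Or.inl ⟨⟨hω, h⟩, hzω⟩
    · exact Or.inr ⟨⟨hω, h⟩, hzω⟩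
  refine (measure_mono_ae hsplit).trans ((measure_union_le _ _).trans (add_le_add ?_ ?_))
  · exact measure_mem_and_lt_le_of_monotoneOn (hs.inter (convex_Ici x₀)).isPreconnected
      (hGc.mono inter_subset_left) hmono ⟨hx₀, le_refl x₀⟩ hz hupper
  -- The lower half is the upper half for the reversed order on `ℝ`.
  · exact measure_mem_and_lt_le_of_monotoneOn (α := ℝᵒᵈ)
      (hs.inter (convex_Iic x₀)).isPreconnected (hGc.mono inter_subset_left) hanti.dual_left
      ⟨hx₀, le_refl x₀⟩ hz hlower

end ProbabilityTheory

section Divergence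

variable {C B C' : ℝ → ℝ} {s : Set ℝ} {θ₀ : ℝ}

theorem hasDerivAt_expFamilyKL {x c : ℝ} (hC : HasDerivAt C c x) (hB : HasDerivAt B (x * c) x) :
    HasDerivAt (fun θ => expFamilyKL C B θ θ₀) (C x - C θ₀) x :=
  ((((hasDerivAt_id' x).mul (hC.sub_const (C θ₀))).sub hB).add_const (B θ₀)).congr_deriv
    (by ring)

theorem monotoneOn_of_hasDerivAt_nonneg (hs : Convex ℝ s)
    (hC : ∀ x ∈ s, HasDerivAt C (C' x) x) (hC' : ∀ x ∈ s, 0 ≤ C' x) : MonotoneOn C s :=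
  monotoneOn_of_hasDerivWithinAt_nonneg hs (HasDerivAt.continuousOn hC)
    (fun x hx => (hC x (interior_subset hx)).hasDerivWithinAt)
    fun x hx => hC' x (interior_subset hx)

theorem monotoneOn_inter_Ici_of_hasDerivAt_sub {f g : ℝ → ℝ} (hs : Convex ℝ s) (hθ₀ : θ₀ ∈ s)
    (hg : MonotoneOn g s) (hf : ∀ x ∈ s, HasDerivAt f (g x - g θ₀) x) :
    MonotoneOn f (s ∩ Ici θ₀) :=
  monotoneOn_of_hasDerivWithinAt_nonneg (hs.inter (convex_Ici θ₀))
    (HasDerivAt.continuousOn fun _ hx => hf _ hx.1)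
    (fun x hx => (hf x (interior_subset hx).1).hasDerivWithinAt)
    fun _ hx => sub_nonneg.2 (hg hθ₀ (interior_subset hx).1 (interior_subset hx).2)

theorem antitoneOn_inter_Iic_of_hasDerivAt_sub {f g : ℝ → ℝ} (hs : Convex ℝ s) (hθ₀ : θ₀ ∈ s)
    (hg : MonotoneOn g s) (hf : ∀ x ∈ s, HasDerivAt f (g x - g θ₀) x) :
    AntitoneOn f (s ∩ Iic θ₀) :=
  antitoneOn_of_hasDerivWithinAt_nonpos (hs.inter (convex_Iic θ₀))
    (HasDerivAt.continuousOn fun _ hx => hf _ hx.1)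
    (fun x hx => (hf x (interior_subset hx).1).hasDerivWithinAt)
    fun _ hx => sub_nonpos.2 (hg (interior_subset hx).1 hθ₀ (interior_subset hx).2)

end Divergence

theorem param_exponential_bound_general
    (Θ : Set ℝ) (hΘconv : Convex ℝ Θ)
    (ν : Measure ℝ)
    (q : ℝ → ℝ) (hq : Measurable q) (hqnn : ∀ y, 0 ≤ q y)
    (B C B' C' : ℝ → ℝ)
    (hC : ∀ a ∈ Θ, HasDerivAt C (C' a) a)
    (hB : ∀ a ∈ Θ, HasDerivAt B (B' a) a)
    (hCpos : ∀ a ∈ Θ, 0 < C' a)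
    (hBeq : ∀ a ∈ Θ, B' a = a * C' a)
    (p : ℝ → ℝ → ℝ) (hp : ∀ y a, p y a = q y * Real.exp (y * C a - B a))
    (Pθ : ℝ → Measure ℝ)
    (hPθ : ∀ a ∈ Θ, Pθ a = ν.withDensity (fun y => ENNReal.ofReal (p y a)))
    (hPθprob : ∀ a ∈ Θ, IsProbabilityMeasure (Pθ a))
    (K : ℝ → ℝ → ℝ)
    (hK : ∀ a b, K a b = a * (C a - C b) - B a + B b)
    {Ω : Type*} [MeasurableSpace Ω] (P : Measure Ω)
    (n : ℕ) (w : Fin n → ℝ) (hw : ∀ i, w i ∈ Set.Icc (0 : ℝ) 1)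
    (N : ℝ) (hN : N = ∑ i, w i) (hNpos : 0 < N)
    (θstar : ℝ) (hθstar : θstar ∈ Θ)
    (Y : Fin n → Ω → ℝ) (hYmeas : ∀ i, Measurable (Y i))
    (hYindep : iIndepFun Y P)
    (hYlaw : ∀ i, 0 < w i → Measure.map (Y i) P = Pθ θstar)
    (θt : Ω → ℝ) (hθt : ∀ ω, θt ω = (∑ i, w i * Y i ω) / N)
    (hθtΘ : ∀ᵐ ω ∂P, θt ω ∈ Θ) :
    ∀ z : ℝ, 0 < z →
      P {ω | z < N * K (θt ω) θstar} ≤ ENNReal.ofReal (2 * Real.exp (-z)) := by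
  intro z hz
  obtain rfl : K = expFamilyKL C B := funext₂ hK
  have hPθexp : ∀ a ∈ Θ, Pθ a = expFamilyMeasure ν q C B a := fun a ha => by
    simp only [hPθ a ha, hp, expFamilyMeasure]
  have hCmono : MonotoneOn C Θ :=
    monotoneOn_of_hasDerivAt_nonneg hΘconv hC fun a ha => (hCpos a ha).le
  have hKderiv : ∀ x ∈ Θ, HasDerivAt (fun θ => expFamilyKL C B θ θstar) (C x - C θstar) x :=
    fun x hx => hasDerivAt_expFamilyKL (hC x hx) (hBeq x hx ▸ hB x hx)
  have hprob : ∀ a ∈ Θ, IsProbabilityMeasure (expFamilyMeasure ν q C B a) :=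
    fun a ha => hPθexp a ha ▸ hPθprob a ha
  have := hprob θstar hθstar
  rw [hPθexp θstar hθstar] at hYlaw
  obtain rfl : θt = fun ω => (∑ i, w i * Y i ω) / N := funext hθt
  subst hN
  refine (measure_lt_le_add_of_monotoneOn_of_antitoneOn
    (G := fun θ => (∑ i, w i) * expFamilyKL C B θ θstar) (b := ENNReal.ofReal (exp (-z)))
    (b' := ENNReal.ofReal (exp (-z))) hΘconv
    (continuousOn_const.mul (HasDerivAt.continuousOn hKderiv)) hθstar
    ((monotone_mul_left_of_nonneg hNpos.le).comp_monotoneOn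
      (monotoneOn_inter_Ici_of_hasDerivAt_sub hΘconv hθstar hCmono hKderiv))
    ((monotone_mul_left_of_nonneg hNpos.le).comp_antitoneOn
      (antitoneOn_inter_Iic_of_hasDerivAt_sub hΘconv hθstar hCmono hKderiv))
    hθtΘ (by simp [expFamilyKL, hz.le]) ?_ ?_).trans_eq ?_
  · rintro θ ⟨hθ, hθstar_le⟩ rfl
    have := hprob θ hθ
    exact measure_weighted_mean_ge_le_exp hq hqnn hYmeas hYindep hw hYlaw hNpos
      (hCmono hθstar hθ hθstar_le)
  · rintro θ ⟨hθ, hθ_le⟩ rfl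
    have := hprob θ hθ
    exact measure_weighted_mean_le_le_exp hq hqnn hYmeas hYindep hw hYlaw hNpos
      (hCmono hθ hθstar hθ_le)
  · rw [← ENNReal.ofReal_add (exp_pos _).le (exp_pos _).le, two_mul]

/-- exponential bound for the fitted local log-likelihood in the
parametric situation (Theorem 2.2). -/
theorem param_exponential_bound
    (Θ : Set ℝ) (hΘcomp : IsCompact Θ) (hΘconv : Convex ℝ Θ)
    (ν : Measure ℝ) [SigmaFinite ν]
    (q : ℝ → ℝ) (hq : Measurable q) (hqnn : ∀ y, 0 ≤ q y)
    (B C B' C' : ℝ → ℝ)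
    (hC : ∀ a ∈ Θ, HasDerivAt C (C' a) a)
    (hB : ∀ a ∈ Θ, HasDerivAt B (B' a) a)
    (hCcont : ContinuousOn C' Θ) (hBcont : ContinuousOn B' Θ)
    (hCpos : ∀ a ∈ Θ, 0 < C' a)
    (hBeq : ∀ a ∈ Θ, B' a = a * C' a)
    (p : ℝ → ℝ → ℝ) (hp : ∀ y a, p y a = q y * Real.exp (y * C a - B a))
    (Pθ : ℝ → Measure ℝ)
    (hPθ : ∀ a ∈ Θ, Pθ a = ν.withDensity (fun y => ENNReal.ofReal (p y a)))
    (hPθprob : ∀ a ∈ Θ, IsProbabilityMeasure (Pθ a))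
    (K : ℝ → ℝ → ℝ)
    (hK : ∀ a b, K a b = a * (C a - C b) - B a + B b)
    {Ω : Type*} [MeasurableSpace Ω] (P : Measure Ω) [IsProbabilityMeasure P]
    (n : ℕ) (w : Fin n → ℝ) (hw : ∀ i, w i ∈ Set.Icc (0 : ℝ) 1)
    (N : ℝ) (hN : N = ∑ i, w i) (hNpos : 0 < N)
    (θstar : ℝ) (hθstar : θstar ∈ Θ)
    (Y : Fin n → Ω → ℝ) (hYmeas : ∀ i, Measurable (Y i))
    (hYindep : iIndepFun Y P)
    (hYlaw : ∀ i, 0 < w i → Measure.map (Y i) P = Pθ θstar)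
    (θt : Ω → ℝ) (hθt : ∀ ω, θt ω = (∑ i, w i * Y i ω) / N)
    (hθtΘ : ∀ᵐ ω ∂P, θt ω ∈ Θ) :
    ∀ z : ℝ, 0 < z →
      P {ω | z < N * K (θt ω) θstar} ≤ ENNReal.ofReal (2 * Real.exp (-z)) :=
  param_exponential_bound_general Θ hΘconv ν q hq hqnn B C B' C' hC hB hCpos hBeq p hp Pθ hPθ
    hPθprob K hK P n w hw N hN hNpos θstar hθstar Y hYmeas hYindep hYlaw θt hθt hθtΘ
end

section
/- Let w_1,…,w_n ∈ [0,1], let f(X_1),…,f(X_n) ∈ Θ and θ ∈ Θ, and suppose Δ(W,θ) := Σ_{i=1}^n δ(θ, f(X_i))·1(w_i > 0) ≤ Δ for some Δ ≥ 0. Let Y_1,…,Y_n be independent with Y_i ~ P_{f(X_i)} (expectation E_{f(·)}), and let E_θ denote expectation when Y_1,…,Y_n are i.i.d. with law P_θ. Then for every nonnegative random variable ξ that is measurable with respect to the σ-field F_W generated by {Y_i : w_i > 0}, E_{f(·)}[ξ] ≤ (e^Δ · E_θ[ξ²])^{1/2}. -/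
open MeasureTheory ProbabilityTheory Real BigOperators

open scoped ENNReal

/-!
On the σ-field generated by `{Yᵢ : wᵢ > 0}`, the law of `Y` under `P_f` has density
`Z = ∏_{wᵢ > 0} (dP_{f(Xᵢ)}/dP_θ)(Yᵢ)` with respect to the parametric law: both sides agree on the
π-system of cylinders `⋂ᵢ {Yᵢ ∈ uᵢ}`, by independence under both measures. Hence
`E_f ξ = E_θ[Z ξ] ≤ (E_θ[Z²] E_θ[ξ²])^{1/2}` by Cauchy–Schwarz, and by independence again
`E_θ[Z²] = ∏_{wᵢ > 0} exp δ(θ, f(Xᵢ)) ≤ e^Δ`.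
-/

theorem ENNReal.ofReal_pow_le_ofReal_pow (x : ℝ) (n : ℕ) :
    ENNReal.ofReal x ^ n ≤ ENNReal.ofReal (x ^ n) := by
  rcases le_total 0 x with hx | hx
  · exact (ENNReal.ofReal_pow hx n).ge
  · rcases n.eq_zero_or_pos with rfl | hn
    · simp
    · simp [ENNReal.ofReal_of_nonpos hx, zero_pow hn.ne']

theorem ENNReal.lintegral_mul_le_rpow_half_lintegral_sq_mul {α : Type*} [MeasurableSpace α]
    {μ : Measure α} {f g : α → ℝ≥0∞} (hf : AEMeasurable f μ) (hg : AEMeasurable g μ) :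
    ∫⁻ a, f a * g a ∂μ ≤ ((∫⁻ a, f a ^ 2 ∂μ) * ∫⁻ a, g a ^ 2 ∂μ) ^ (1 / 2 : ℝ) := by
  rw [ENNReal.mul_rpow_of_nonneg _ _ (by norm_num)]
  simpa only [← ENNReal.rpow_natCast, Nat.cast_ofNat, Pi.mul_apply] using
    ENNReal.lintegral_mul_le_Lp_mul_Lq μ Real.HolderConjugate.two_two hf hg

namespace ProbabilityTheory

variable {Ω ι β : Type*} [MeasurableSpace Ω] [MeasurableSpace β] {μ ν : Measure Ω}
  {Y : ι → Ω → β} {ρ : ι → β → ℝ≥0∞}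

theorem lintegral_prod_comp_eq_prod_lintegral_map (hY : ∀ i, Measurable (Y i))
    (hν : iIndepFun Y ν) (hρ : ∀ i, Measurable (ρ i)) (s : Finset ι) :
    ∫⁻ ω, ∏ i ∈ s, ρ i (Y i ω) ∂ν = ∏ i ∈ s, ∫⁻ y, ρ i y ∂(ν.map (Y i)) := by
  refine (lintegral_prod_eq_prod_lintegral_of_indepFun s _ (hν.comp ρ hρ)
    fun i ↦ (hρ i).comp (hY i)).trans ?_
  exact Finset.prod_congr rfl fun i _ ↦ (lintegral_map (hρ i) (hY i)).symm

theorem measure_iInter_preimage_eq_withDensity_prod (hY : ∀ i, Measurable (Y i))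
    (hμ : iIndepFun Y μ) (hν : iIndepFun Y ν) (hρ : ∀ i, Measurable (ρ i))
    (hlaw : ∀ i, μ.map (Y i) = (ν.map (Y i)).withDensity (ρ i))
    (s : Finset ι) {u : ι → Set β} (hu : ∀ i, MeasurableSet (u i)) :
    μ (⋂ i ∈ s, Y i ⁻¹' u i)
      = ν.withDensity (fun ω ↦ ∏ i ∈ s, ρ i (Y i ω)) (⋂ i ∈ s, Y i ⁻¹' u i) := by
  have hmeas : MeasurableSet (⋂ i ∈ s, Y i ⁻¹' u i) :=
    Finset.measurableSet_biInter s fun i _ ↦ hY i (hu i)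
  have hindicator : ∀ ω, (⋂ i ∈ s, Y i ⁻¹' u i).indicator (fun ω ↦ ∏ i ∈ s, ρ i (Y i ω)) ω
      = ∏ i ∈ s, (u i).indicator (ρ i) (Y i ω) := by
    intro ω
    simp only [← Set.indicator_comp_right]
    rw [prod_indicator_apply, Finset.prod_fn]
    rfl
  rw [hμ.measure_inter_preimage_eq_mul s fun i _ ↦ hu i, withDensity_apply _ hmeas,
    ← lintegral_indicator hmeas, lintegral_congr hindicator,
    lintegral_prod_comp_eq_prod_lintegral_map hY hν (fun i ↦ (hρ i).indicator (hu i))]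
  refine Finset.prod_congr rfl fun i _ ↦ ?_
  rw [← Measure.map_apply (hY i) (hu i), hlaw, withDensity_apply _ (hu i),
    lintegral_indicator (hu i)]

theorem trim_eq_trim_withDensity_prod (hY : ∀ i, Measurable (Y i))
    (hμ : iIndepFun Y μ) (hν : iIndepFun Y ν) (hρ : ∀ i, Measurable (ρ i))
    (hlaw : ∀ i, μ.map (Y i) = (ν.map (Y i)).withDensity (ρ i)) (s : Finset ι)
    (hm : ⨆ i ∈ s, MeasurableSpace.comap (Y i) ‹_› ≤ ‹MeasurableSpace Ω›) :
    μ.trim hm = (ν.withDensity fun ω ↦ ∏ i ∈ s, ρ i (Y i ω)).trim hm := by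
  classical
  have := hμ.isProbabilityMeasure
  have hgen : ⨆ i ∈ s, MeasurableSpace.comap (Y i) ‹_› = MeasurableSpace.generateFrom
      (piiUnionInter (fun i ↦ {v | MeasurableSet[MeasurableSpace.comap (Y i) ‹_›] v}) s) :=
    (generateFrom_piiUnionInter_measurableSet _ _).symm
  refine ext_of_generate_finite _ hgen (isPiSystem_piiUnionInter _
    (fun i ↦ @MeasurableSpace.isPiSystem_measurableSet Ω (MeasurableSpace.comap (Y i) ‹_›)) _)
    ?_ ?_
  · rintro _ ⟨t, hts, f, hf, rfl⟩
    -- write `⋂ i ∈ t, f i` as a cylinder over all of `s`, with trivial factors off `t`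
    have hu : ∀ i, ∃ v : Set β, MeasurableSet v ∧ Y i ⁻¹' v = if i ∈ t then f i else Set.univ := by
      intro i
      split_ifs with hi
      · exact MeasurableSpace.measurableSet_comap.mp (hf i hi)
      · exact ⟨Set.univ, MeasurableSet.univ, rfl⟩
    choose u hu hYu using hu
    have hcylinder : ⋂ i ∈ t, f i = ⋂ i ∈ s, Y i ⁻¹' u i := by
      simp_rw [hYu, Set.iInter_ite, Set.iInter_univ, Set.inter_univ]
      ext ω
      simp only [Set.mem_iInter]
      exact ⟨fun h i _ hi ↦ h i hi, fun h i hi ↦ h i (hts hi) hi⟩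
    have hmeas : MeasurableSet[⨆ i ∈ s, MeasurableSpace.comap (Y i) ‹_›] (⋂ i ∈ t, f i) := by
      rw [hgen]
      exact MeasurableSpace.measurableSet_generateFrom ⟨t, hts, f, hf, rfl⟩
    rw [trim_measurableSet_eq hm hmeas, trim_measurableSet_eq hm hmeas, hcylinder,
      measure_iInter_preimage_eq_withDensity_prod hY hμ hν hρ hlaw s hu]
  · rw [trim_measurableSet_eq hm .univ, trim_measurableSet_eq hm .univ]
    simpa using measure_iInter_preimage_eq_withDensity_prod hY hμ hν hρ hlaw s
      (u := fun _ ↦ Set.univ) fun _ ↦ MeasurableSet.univ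

theorem lintegral_eq_lintegral_prod_mul_of_measurable_iSup_comap (hY : ∀ i, Measurable (Y i))
    (hμ : iIndepFun Y μ) (hν : iIndepFun Y ν) (hρ : ∀ i, Measurable (ρ i))
    (hlaw : ∀ i, μ.map (Y i) = (ν.map (Y i)).withDensity (ρ i)) (s : Finset ι)
    {ξ : Ω → ℝ≥0∞} (hξ : Measurable[⨆ i ∈ s, MeasurableSpace.comap (Y i) ‹_›] ξ) :
    ∫⁻ ω, ξ ω ∂μ = ∫⁻ ω, (∏ i ∈ s, ρ i (Y i ω)) * ξ ω ∂ν := by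
  have hm : ⨆ i ∈ s, MeasurableSpace.comap (Y i) ‹_› ≤ ‹MeasurableSpace Ω› :=
    iSup₂_le fun i _ ↦ (hY i).comap_le
  have hZ : Measurable fun ω ↦ ∏ i ∈ s, ρ i (Y i ω) :=
    Finset.measurable_prod s fun i _ ↦ (hρ i).comp (hY i)
  rw [← lintegral_trim hm hξ, trim_eq_trim_withDensity_prod hY hμ hν hρ hlaw s hm,
    lintegral_trim hm hξ, lintegral_withDensity_eq_lintegral_mul _ hZ (hξ.mono hm le_rfl)]
  rfl

end ProbabilityTheory

section ExponentialFamily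

variable {ν : Measure ℝ} {q B C : ℝ → ℝ} {p : ℝ → ℝ → ℝ}

noncomputable def likelihoodRatio (B C : ℝ → ℝ) (a b y : ℝ) : ℝ :=
  exp (y * (C b - C a) - (B b - B a))

theorem likelihoodRatio_pos (a b y : ℝ) : 0 < likelihoodRatio B C a b y := exp_pos _

theorem measurable_likelihoodRatio (a b : ℝ) : Measurable (likelihoodRatio B C a b) := by
  unfold likelihoodRatio
  fun_prop

theorem expFamily_density_nonneg (hp : ∀ y a, p y a = q y * exp (y * C a - B a))
    (hqnn : ∀ y, 0 ≤ q y) (y a : ℝ) : 0 ≤ p y a := by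
  rw [hp]
  exact mul_nonneg (hqnn y) (exp_pos _).le

theorem measurable_expFamily_density (hp : ∀ y a, p y a = q y * exp (y * C a - B a))
    (hq : Measurable q) (a : ℝ) : Measurable fun y ↦ p y a := by
  simp_rw [hp]
  fun_prop

theorem mul_likelihoodRatio (hp : ∀ y a, p y a = q y * exp (y * C a - B a)) (a b y : ℝ) :
    p y a * likelihoodRatio B C a b y = p y b := by
  rw [likelihoodRatio, hp, hp, mul_assoc, ← exp_add]
  ring_nf

theorem withDensity_likelihoodRatio (hp : ∀ y a, p y a = q y * exp (y * C a - B a))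
    (hq : Measurable q) (hqnn : ∀ y, 0 ≤ q y) (a b : ℝ) :
    (ν.withDensity fun y ↦ ENNReal.ofReal (p y a)).withDensity
        (fun y ↦ ENNReal.ofReal (likelihoodRatio B C a b y))
      = ν.withDensity fun y ↦ ENNReal.ofReal (p y b) := by
  rw [← withDensity_mul _ (measurable_expFamily_density hp hq a).ennreal_ofReal
    (measurable_likelihoodRatio a b).ennreal_ofReal]
  refine congrArg _ (funext fun y ↦ ?_)
  rw [Pi.mul_apply, ← ENNReal.ofReal_mul (expFamily_density_nonneg hp hqnn y a),
    mul_likelihoodRatio hp]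

theorem lintegral_likelihoodRatio_sq (hp : ∀ y a, p y a = q y * exp (y * C a - B a))
    (hq : Measurable q) (hqnn : ∀ y, 0 ≤ q y) (a b : ℝ) :
    ∫⁻ y, ENNReal.ofReal (likelihoodRatio B C a b y) ^ 2
        ∂(ν.withDensity fun y ↦ ENNReal.ofReal (p y a))
      = ∫⁻ y, ENNReal.ofReal (p y b ^ 2 / p y a) ∂ν := by
  rw [lintegral_withDensity_eq_lintegral_mul _ (measurable_expFamily_density hp hq a).ennreal_ofReal
    ((measurable_likelihoodRatio a b).ennreal_ofReal.pow_const 2)]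
  refine lintegral_congr fun y ↦ ?_
  have hpa := expFamily_density_nonneg hp hqnn y a
  rw [Pi.mul_apply, ← ENNReal.ofReal_pow (likelihoodRatio_pos a b y).le,
    ← ENNReal.ofReal_mul hpa, ← mul_likelihoodRatio hp a b y]
  rcases hpa.eq_or_lt with h | h
  · simp [← h]
  · field_simp

theorem lintegral_prod_likelihoodRatio_sq (hp : ∀ y a, p y a = q y * exp (y * C a - B a))
    (hq : Measurable q) (hqnn : ∀ y, 0 ≤ q y) {Ω ι : Type*} [MeasurableSpace Ω] {P : Measure Ω}
    {Y : ι → Ω → ℝ} (hY : ∀ i, Measurable (Y i)) (hind : iIndepFun Y P) {a : ℝ}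
    (hlaw : ∀ i, P.map (Y i) = ν.withDensity fun y ↦ ENNReal.ofReal (p y a))
    (b : ι → ℝ) (s : Finset ι) :
    ∫⁻ ω, (∏ i ∈ s, ENNReal.ofReal (likelihoodRatio B C a (b i) (Y i ω))) ^ 2 ∂P
      = ∏ i ∈ s, ∫⁻ y, ENNReal.ofReal (p y (b i) ^ 2 / p y a) ∂ν := by
  simp_rw [← Finset.prod_pow]
  rw [lintegral_prod_comp_eq_prod_lintegral_map hY hind
    fun i ↦ ((measurable_likelihoodRatio a (b i)).ennreal_ofReal.pow_const 2)]
  exact Finset.prod_congr rfl fun i _ ↦ by rw [hlaw, lintegral_likelihoodRatio_sq hp hq hqnn]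

end ExponentialFamily

theorem small_modeling_bias_bound_general
    (Θ : Set ℝ)
    (ν : Measure ℝ)
    (q : ℝ → ℝ) (hq : Measurable q) (hqnn : ∀ y, 0 ≤ q y)
    (B C : ℝ → ℝ)
    (p : ℝ → ℝ → ℝ) (hp : ∀ y a, p y a = q y * Real.exp (y * C a - B a))
    (Pθ : ℝ → Measure ℝ)
    (hPθ : ∀ a ∈ Θ, Pθ a = ν.withDensity (fun y => ENNReal.ofReal (p y a)))
    (δ : ℝ → ℝ → ℝ)
    (hδ : ∀ a ∈ Θ, ∀ b ∈ Θ, ENNReal.ofReal (Real.exp (δ a b))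
        = ∫⁻ y, ENNReal.ofReal ((p y b) ^ 2 / p y a) ∂ν)
    (n : ℕ) (w : Fin n → ℝ)
    (fX : Fin n → ℝ) (hfX : ∀ i, fX i ∈ Θ)
    (θ : ℝ) (hθΘ : θ ∈ Θ)
    (Δ : ℝ)
    (hΔ : (∑ i, if 0 < w i then δ θ (fX i) else 0) ≤ Δ)
    {Ω : Type*} [MeasurableSpace Ω]
    (Pf Ppar : Measure Ω)
    (Y : Fin n → Ω → ℝ) (hYmeas : ∀ i, Measurable (Y i))
    (hYindepf : iIndepFun Y Pf)
    (hYlawf : ∀ i, Measure.map (Y i) Pf = Pθ (fX i))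
    (hYindeppar : iIndepFun Y Ppar)
    (hYlawpar : ∀ i, Measure.map (Y i) Ppar = Pθ θ)
    (ξ : Ω → ℝ)
    (hξmeas : @Measurable Ω ℝ
      (⨆ i ∈ {i | 0 < w i}, MeasurableSpace.comap (Y i) inferInstance) _ ξ) :
    ∫⁻ ω, ENNReal.ofReal (ξ ω) ∂Pf
      ≤ (ENNReal.ofReal (Real.exp Δ) * ∫⁻ ω, ENNReal.ofReal ((ξ ω) ^ 2) ∂Ppar)
          ^ (1 / 2 : ℝ) := by
  set s := Finset.univ.filter fun i ↦ 0 < w i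
  set ρ : Fin n → ℝ → ℝ≥0∞ := fun i y ↦ ENNReal.ofReal (likelihoodRatio B C θ (fX i) y)
  have hρ : ∀ i, Measurable (ρ i) := fun i ↦ (measurable_likelihoodRatio _ _).ennreal_ofReal
  have hlaw : ∀ i, Pf.map (Y i) = (Ppar.map (Y i)).withDensity (ρ i) := fun i ↦ by
    rw [hYlawf, hYlawpar, hPθ θ hθΘ, hPθ _ (hfX i), withDensity_likelihoodRatio hp hq hqnn]
  have hξ : Measurable[⨆ i ∈ s, MeasurableSpace.comap (Y i) inferInstance]
      fun ω ↦ ENNReal.ofReal (ξ ω) := by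
    convert ENNReal.measurable_ofReal.comp hξmeas using 2 <;> simp [s]
  have hsecond : ∫⁻ ω, (∏ i ∈ s, ρ i (Y i ω)) ^ 2 ∂Ppar ≤ ENNReal.ofReal (exp Δ) := by
    rw [lintegral_prod_likelihoodRatio_sq hp hq hqnn hYmeas hYindeppar
      (fun i ↦ (hYlawpar i).trans (hPθ θ hθΘ)),
      ← Finset.prod_congr rfl fun i _ ↦ hδ θ hθΘ _ (hfX i),
      ← ENNReal.ofReal_prod_of_nonneg fun i _ ↦ (exp_pos _).le, ← exp_sum, Finset.sum_filter]
    gcongr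
  calc ∫⁻ ω, ENNReal.ofReal (ξ ω) ∂Pf
      = ∫⁻ ω, (∏ i ∈ s, ρ i (Y i ω)) * ENNReal.ofReal (ξ ω) ∂Ppar :=
        lintegral_eq_lintegral_prod_mul_of_measurable_iSup_comap hYmeas hYindepf hYindeppar hρ
          hlaw s hξ
    _ ≤ ((∫⁻ ω, (∏ i ∈ s, ρ i (Y i ω)) ^ 2 ∂Ppar) * ∫⁻ ω, ENNReal.ofReal (ξ ω) ^ 2 ∂Ppar)
          ^ (1 / 2 : ℝ) :=
        ENNReal.lintegral_mul_le_rpow_half_lintegral_sq_mul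
          (Finset.measurable_prod s fun i _ ↦ (hρ i).comp (hYmeas i)).aemeasurable
          (hξ.mono (iSup₂_le fun i _ ↦ (hYmeas i).comap_le) le_rfl).aemeasurable
    _ ≤ _ := by
        gcongr with ω
        exact ENNReal.ofReal_pow_le_ofReal_pow (ξ ω) 2

/-- the "small modeling bias" bound (Theorem 2.5): for a nonnegative
random variable ξ measurable w.r.t. the σ-field generated by the observations with
positive weights, the expectation under the nonparametric model is bounded via the
second moment under the parametric model. -/
theorem small_modeling_bias_bound
    (Θ : Set ℝ) (hΘcomp : IsCompact Θ) (hΘconv : Convex ℝ Θ)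
    (ν : Measure ℝ) [SigmaFinite ν]
    (q : ℝ → ℝ) (hq : Measurable q) (hqnn : ∀ y, 0 ≤ q y)
    (B C B' C' : ℝ → ℝ)
    (hC : ∀ a ∈ Θ, HasDerivAt C (C' a) a)
    (hB : ∀ a ∈ Θ, HasDerivAt B (B' a) a)
    (hCcont : ContinuousOn C' Θ) (hBcont : ContinuousOn B' Θ)
    (hCpos : ∀ a ∈ Θ, 0 < C' a)
    (hBeq : ∀ a ∈ Θ, B' a = a * C' a)
    (p : ℝ → ℝ → ℝ) (hp : ∀ y a, p y a = q y * Real.exp (y * C a - B a))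
    (Pθ : ℝ → Measure ℝ)
    (hPθ : ∀ a ∈ Θ, Pθ a = ν.withDensity (fun y => ENNReal.ofReal (p y a)))
    (hPθprob : ∀ a ∈ Θ, IsProbabilityMeasure (Pθ a))
    (K : ℝ → ℝ → ℝ)
    (hK : ∀ a b, K a b = a * (C a - C b) - B a + B b)
    (δ : ℝ → ℝ → ℝ)
    (hδ : ∀ a ∈ Θ, ∀ b ∈ Θ, ENNReal.ofReal (Real.exp (δ a b))
        = ∫⁻ y, ENNReal.ofReal ((p y b) ^ 2 / p y a) ∂ν)
    (n : ℕ) (w : Fin n → ℝ) (hw : ∀ i, w i ∈ Set.Icc (0 : ℝ) 1)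
    (fX : Fin n → ℝ) (hfX : ∀ i, fX i ∈ Θ)
    (θ : ℝ) (hθΘ : θ ∈ Θ)
    (Δ : ℝ) (hΔnn : 0 ≤ Δ)
    (hΔ : (∑ i, if 0 < w i then δ θ (fX i) else 0) ≤ Δ)
    {Ω : Type*} [MeasurableSpace Ω]
    (Pf Ppar : Measure Ω) [IsProbabilityMeasure Pf] [IsProbabilityMeasure Ppar]
    (Y : Fin n → Ω → ℝ) (hYmeas : ∀ i, Measurable (Y i))
    (hYindepf : iIndepFun Y Pf)
    (hYlawf : ∀ i, Measure.map (Y i) Pf = Pθ (fX i))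
    (hYindeppar : iIndepFun Y Ppar)
    (hYlawpar : ∀ i, Measure.map (Y i) Ppar = Pθ θ)
    (ξ : Ω → ℝ) (hξnn : ∀ ω, 0 ≤ ξ ω)
    (hξmeas : @Measurable Ω ℝ
      (⨆ i ∈ {i | 0 < w i}, MeasurableSpace.comap (Y i) inferInstance) _ ξ) :
    ∫⁻ ω, ENNReal.ofReal (ξ ω) ∂Pf
      ≤ (ENNReal.ofReal (Real.exp Δ) * ∫⁻ ω, ENNReal.ofReal ((ξ ω) ^ 2) ∂Ppar)
          ^ (1 / 2 : ℝ) :=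
  small_modeling_bias_bound_general Θ ν q hq hqnn B C p hp Pθ hPθ δ hδ n w fX hfX θ hθΘ Δ hΔ Pf Ppar
    Y hYmeas hYindepf hYlawf hYindeppar hYlawpar ξ hξmeas
end

section
/- For every r > 0, the function h(x) := (log(x + c_r))^r with c_r := e^{max(r−1,0)} is concave on (0,∞). -/
open Real Set

namespace Real

lemma hasDerivAt_log_rpow {r y : ℝ} (hy : 1 < y) :
    HasDerivAt (fun y => log y ^ r) (r * log y ^ (r - 1) / y) y := by
  have hlog : log y ≠ 0 := (log_pos hy).ne'
  convert ((hasDerivAt_log (by positivity)).rpow_const (p := r) (.inl hlog)) using 1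
  ring

lemma hasDerivAt_mul_log_rpow_sub_one_div {r y : ℝ} (hy : 1 < y) :
    HasDerivAt (fun y => r * log y ^ (r - 1) / y)
      (r * log y ^ (r - 1) * (r - 1 - log y) / (log y * y ^ 2)) y := by
  have hy₀ : y ≠ 0 := by positivity
  have hlog : log y ≠ 0 := (log_pos hy).ne'
  have hpow := ((hasDerivAt_log hy₀).rpow_const (p := r - 1) (.inl hlog)).const_mul r
  refine (hpow.div (hasDerivAt_id' y) hy₀).congr_deriv ?_
  rw [rpow_sub_one hlog]
  field_simp

/-- The second derivative `r (log y) ^ (r - 2) (r - 1 - log y) / y ^ 2` is nonpositive as soon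
as `log y ≥ max (r - 1) 0`. -/
theorem concaveOn_log_rpow {r : ℝ} (hr : 0 ≤ r) :
    ConcaveOn ℝ (Ici (exp (max (r - 1) 0))) (fun y => log y ^ r) := by
  have mem_interior {y : ℝ} (hy : y ∈ interior (Ici (exp (max (r - 1) 0)))) :
      max (r - 1) 0 < log y ∧ 1 < y := by
    rw [interior_Ici, mem_Ioi] at hy
    have hpos : 0 < exp (max (r - 1) 0) := exp_pos _
    refine ⟨(lt_log_iff_exp_lt (hpos.trans hy)).mpr hy, ?_⟩
    exact lt_of_le_of_lt (one_le_exp (le_max_right _ _)) hy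
  refine concaveOn_of_hasDerivWithinAt2_nonpos (convex_Ici _) ?_
    (fun y hy => (hasDerivAt_log_rpow (mem_interior hy).2).hasDerivWithinAt)
    (fun y hy => (hasDerivAt_mul_log_rpow_sub_one_div (mem_interior hy).2).hasDerivWithinAt) ?_
  · refine ContinuousOn.rpow_const (continuousOn_log.mono fun y hy => ?_) fun _ _ => .inr hr
    exact (exp_pos _).trans_le hy |>.ne'
  · intro y hy
    obtain ⟨hlog, hy⟩ := mem_interior hy
    have hlog₀ : 0 < log y := (le_max_right _ _).trans_lt hlog
    have hsub : r - 1 - log y ≤ 0 := by linarith [le_max_left (r - 1) 0]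
    exact div_nonpos_of_nonpos_of_nonneg
      (mul_nonpos_of_nonneg_of_nonpos (by positivity) hsub) (by positivity)

end Real

/-- for every r > 0, the function x ↦ (log(x + c_r))^r with
c_r = e^{max(r-1,0)} is concave on (0,∞). -/
theorem log_pow_concave (r : ℝ) (hr : 0 < r) :
    ConcaveOn ℝ (Set.Ioi (0 : ℝ))
      (fun x => (Real.log (x + Real.exp (max (r - 1) 0))) ^ r) := by
  refine ((concaveOn_log_rpow hr.le).translate_left (exp (max (r - 1) 0))).subset
    (fun x hx => ?_) (convex_Ioi 0)
  simpa using (mem_Ioi.mp hx).le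
end

section
/- For every θ_0, θ_1, θ_2 ∈ Θ, K(θ_1,θ_2)^{1/2} ≤ κ·(K(θ_1,θ_0)^{1/2} + K(θ_2,θ_0)^{1/2}); moreover, for every finite sequence θ_0, θ_1, …, θ_m ∈ Θ, K(θ_0,θ_m)^{1/2} ≤ κ·(K(θ_0,θ_1)^{1/2} + K(θ_1,θ_2)^{1/2} + … + K(θ_{m−1},θ_m)^{1/2}). -/
/-!
On a segment `[a, b] ⊆ Θ` the divergence `K(a, b) = ∫_a^b (u - a) I(u) du` lies between
`min I · (b - a)² / 2` and `max I · (b - a)² / 2`, so `√K(a, b)` is comparable to `|b - a|`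
up to a factor `√(I / 2)`. Fixing this factor at the maximiser `U` of `I` on the outer segment,
`√K` is bounded above by `√(I U / 2)` times the distance of its endpoints, while on every other
segment `√(I U / 2)` times the distance is at most `κ √K`, because `I U ≤ κ² I v` for the
minimiser `v` there. Both inequalities then follow from the triangle inequality for `|· - ·|`.
-/

open MeasureTheory Real Set

theorem integral_sub_mul_nonneg {a b : ℝ} {g : ℝ → ℝ} (hg : ∀ u ∈ uIcc a b, 0 ≤ g u) :
    0 ≤ ∫ u in a..b, (u - a) * g u := by
  rcases le_total a b with hab | hba
  · refine intervalIntegral.integral_nonneg hab fun u hu => ?_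
    exact mul_nonneg (by linarith [hu.1]) (hg u (Icc_subset_uIcc hu))
  · rw [intervalIntegral.integral_symm, ← intervalIntegral.integral_neg]
    refine intervalIntegral.integral_nonneg hba fun u hu => ?_
    have := hg u (Icc_subset_uIcc' hu)
    nlinarith [hu.2]

theorem integral_sub_mul_const (a b c : ℝ) :
    ∫ u in a..b, (u - a) * c = c * (b - a) ^ 2 / 2 := by
  simp only [intervalIntegral.integral_mul_const, intervalIntegral.integral_comp_sub_right
    (fun u => u), integral_id]
  ring

section

variable {a b c : ℝ} {f : ℝ → ℝ}

theorem intervalIntegrable_sub_mul (hf : IntervalIntegrable f volume a b) :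
    IntervalIntegrable (fun u => (u - a) * f u) volume a b :=
  hf.continuousOn_mul (continuousOn_id.sub continuousOn_const)

theorem mul_sq_div_two_le_integral_sub_mul (hf : IntervalIntegrable f volume a b)
    (hc : ∀ u ∈ uIcc a b, c ≤ f u) :
    c * (b - a) ^ 2 / 2 ≤ ∫ u in a..b, (u - a) * f u := by
  have h := integral_sub_mul_nonneg (g := fun u => f u - c) fun u hu => sub_nonneg.2 (hc u hu)
  simp only [mul_sub] at h
  rw [intervalIntegral.integral_sub (intervalIntegrable_sub_mul hf)
    (intervalIntegrable_sub_mul intervalIntegrable_const), integral_sub_mul_const] at h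
  linarith

theorem integral_sub_mul_le_mul_sq_div_two (hf : IntervalIntegrable f volume a b)
    (hc : ∀ u ∈ uIcc a b, f u ≤ c) :
    ∫ u in a..b, (u - a) * f u ≤ c * (b - a) ^ 2 / 2 := by
  have h := integral_sub_mul_nonneg (g := fun u => c - f u) fun u hu => sub_nonneg.2 (hc u hu)
  simp only [mul_sub] at h
  rw [intervalIntegral.integral_sub (intervalIntegrable_sub_mul intervalIntegrable_const)
    (intervalIntegrable_sub_mul hf), integral_sub_mul_const] at h
  linarith

end

theorem sqrt_mul_sq_sub (c a b : ℝ) : √(c * (b - a) ^ 2) = √c * dist a b := by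
  rw [sqrt_mul' _ (sq_nonneg _), sqrt_sq_eq_abs, dist_comm, Real.dist_eq]

section

variable {Θ : Set ℝ} {I : ℝ → ℝ}

theorem exists_sqrt_integral_sub_mul_le (hΘ : Convex ℝ Θ) (hI : ContinuousOn I Θ) {a b : ℝ}
    (ha : a ∈ Θ) (hb : b ∈ Θ) :
    ∃ U ∈ Θ, √(∫ u in a..b, (u - a) * I u) ≤ √(I U / 2) * dist a b := by
  have hsub : uIcc a b ⊆ Θ := hΘ.ordConnected.uIcc_subset ha hb
  obtain ⟨U, hU, hmax⟩ :=
    isCompact_uIcc.exists_isMaxOn nonempty_uIcc (hI.mono hsub)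
  refine ⟨U, hsub hU, ?_⟩
  have hK := integral_sub_mul_le_mul_sq_div_two (hI.mono hsub).intervalIntegrable
    fun u hu => hmax hu
  rw [← sqrt_mul_sq_sub]
  exact sqrt_le_sqrt (by linarith)

theorem sqrt_mul_dist_le_mul_sqrt_integral_sub_mul {κ : ℝ} (hΘ : Convex ℝ Θ) (hI : ContinuousOn I Θ)
    (hIpos : ∀ u ∈ Θ, 0 < I u) (hIκ : ∀ u ∈ Θ, ∀ v ∈ Θ, √(I u / I v) ≤ κ)
    {U a b : ℝ} (hU : U ∈ Θ) (ha : a ∈ Θ) (hb : b ∈ Θ) :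
    √(I U / 2) * dist a b ≤ κ * √(∫ u in a..b, (u - a) * I u) := by
  have hsub : uIcc a b ⊆ Θ := hΘ.ordConnected.uIcc_subset ha hb
  obtain ⟨v, hv, hmin⟩ :=
    isCompact_uIcc.exists_isMinOn nonempty_uIcc (hI.mono hsub)
  obtain ⟨hκ, hUv⟩ := sqrt_le_iff.1 (hIκ U hU v (hsub hv))
  rw [div_le_iff₀ (hIpos v (hsub hv))] at hUv
  have hK := mul_sq_div_two_le_integral_sub_mul (hI.mono hsub).intervalIntegrable
    fun u hu => hmin hu
  calc √(I U / 2) * dist a b = √(I U / 2 * (b - a) ^ 2) := (sqrt_mul_sq_sub _ _ _).symm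
    _ ≤ √(κ ^ 2 * ∫ u in a..b, (u - a) * I u) := by
      refine sqrt_le_sqrt ?_
      calc I U / 2 * (b - a) ^ 2 ≤ κ ^ 2 * (I v * (b - a) ^ 2 / 2) := by
            nlinarith [sq_nonneg (b - a)]
        _ ≤ κ ^ 2 * ∫ u in a..b, (u - a) * I u := by gcongr
    _ = κ * √(∫ u in a..b, (u - a) * I u) := by rw [sqrt_mul (sq_nonneg κ), sqrt_sq hκ]

end

theorem sqrt_KL_metric_like_general
    (Θ : Set ℝ) (hΘconv : Convex ℝ Θ) (κ : ℝ)
    (I : ℝ → ℝ) (hIcont : ContinuousOn I Θ) (hIpos : ∀ u ∈ Θ, 0 < I u)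
    (hIκ : ∀ u ∈ Θ, ∀ v ∈ Θ, Real.sqrt (I u / I v) ≤ κ)
    (K : ℝ → ℝ → ℝ) (hK : ∀ a b, K a b = ∫ u in a..b, (u - a) * I u) :
    (∀ θ₀ ∈ Θ, ∀ θ₁ ∈ Θ, ∀ θ₂ ∈ Θ,
      Real.sqrt (K θ₁ θ₂) ≤ κ * (Real.sqrt (K θ₁ θ₀) + Real.sqrt (K θ₂ θ₀))) ∧
    (∀ (m : ℕ) (θs : ℕ → ℝ), (∀ j ≤ m, θs j ∈ Θ) →
      Real.sqrt (K (θs 0) (θs m))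
        ≤ κ * ∑ j ∈ Finset.range m, Real.sqrt (K (θs j) (θs (j + 1)))) := by
  have lower := @sqrt_mul_dist_le_mul_sqrt_integral_sub_mul _ _ _ hΘconv hIcont hIpos hIκ
  simp only [hK]
  refine ⟨fun θ₀ h₀ θ₁ h₁ θ₂ h₂ => ?_, fun m θs hθs => ?_⟩
  · obtain ⟨U, hU, upper⟩ := exists_sqrt_integral_sub_mul_le hΘconv hIcont h₁ h₂
    calc _ ≤ √(I U / 2) * dist θ₁ θ₂ := upper
      _ ≤ √(I U / 2) * (dist θ₁ θ₀ + dist θ₂ θ₀) := by gcongr; exact dist_triangle_right _ _ _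
      _ ≤ κ * √(∫ u in θ₁..θ₀, (u - θ₁) * I u) + κ * √(∫ u in θ₂..θ₀, (u - θ₂) * I u) := by
        rw [mul_add]; exact add_le_add (lower hU h₁ h₀) (lower hU h₂ h₀)
      _ = _ := (mul_add _ _ _).symm
  · obtain ⟨U, hU, upper⟩ := exists_sqrt_integral_sub_mul_le hΘconv hIcont
      (hθs 0 m.zero_le) (hθs m le_rfl)
    calc _ ≤ √(I U / 2) * dist (θs 0) (θs m) := upper
      _ ≤ √(I U / 2) * ∑ j ∈ Finset.range m, dist (θs j) (θs (j + 1)) := by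
        gcongr; exact dist_le_range_sum_dist θs m
      _ ≤ κ * ∑ j ∈ Finset.range m, √(∫ u in θs j..θs (j + 1), (u - θs j) * I u) := by
        rw [Finset.mul_sum, Finset.mul_sum]
        refine Finset.sum_le_sum fun j hj => lower hU (hθs j ?_) (hθs (j + 1) ?_) <;>
          simp only [Finset.mem_range] at hj <;> omega

/-- "metric-like" property of the square root of the
Kullback–Leibler divergence (Lemma A.1). -/
theorem sqrt_KL_metric_like
    (Θ : Set ℝ) (hΘconv : Convex ℝ Θ) (κ : ℝ) (hκ : 1 ≤ κ)
    (I : ℝ → ℝ) (hIcont : ContinuousOn I Θ) (hIpos : ∀ u ∈ Θ, 0 < I u)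
    (hIκ : ∀ u ∈ Θ, ∀ v ∈ Θ, Real.sqrt (I u / I v) ≤ κ)
    (K : ℝ → ℝ → ℝ) (hK : ∀ a b, K a b = ∫ u in a..b, (u - a) * I u) :
    (∀ θ₀ ∈ Θ, ∀ θ₁ ∈ Θ, ∀ θ₂ ∈ Θ,
      Real.sqrt (K θ₁ θ₂) ≤ κ * (Real.sqrt (K θ₁ θ₀) + Real.sqrt (K θ₂ θ₀))) ∧
    (∀ (m : ℕ) (θs : ℕ → ℝ), (∀ j ≤ m, θs j ∈ Θ) →
      Real.sqrt (K (θs 0) (θs m))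
        ≤ κ * ∑ j ∈ Finset.range m, Real.sqrt (K (θs j) (θs (j + 1)))) :=
  sqrt_KL_metric_like_general Θ hΘconv κ I hIcont hIpos hIκ K hK
end

section
/- For the SSA recursion, for every 2 ≤ k ≤ K, N_k · K(θ̂^{(k)}, θ̂^{(k−1)}) ≤ z_k. -/
/-!
Moving the first argument of `K(·, b)` towards `b` can only decrease it, by the three-point
identity `K(a, b) = K(a, c) + K(c, b) + (c - a) ∫_c^b I` whose terms are all nonnegative when `c`
lies between `a` and `b`. The SSA update `θ̂⁽ᵏ⁾` is a convex combination of `θ̃⁽ᵏ⁾` and `θ̂⁽ᵏ⁻¹⁾`.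
If its weight `γ_k` vanishes, then `θ̂⁽ᵏ⁾ = θ̂⁽ᵏ⁻¹⁾` and `K(θ̂⁽ᵏ⁾, θ̂⁽ᵏ⁻¹⁾) = 0`; otherwise the
kernel's argument is `< 1`, i.e. `N_k K(θ̃⁽ᵏ⁾, θ̂⁽ᵏ⁻¹⁾) < z_k`, and monotonicity finishes.
-/

open MeasureTheory Set

noncomputable def fisherKL (I : ℝ → ℝ) (a b : ℝ) : ℝ := ∫ u in a..b, (u - a) * I u

namespace fisherKL

variable {I : ℝ → ℝ} {a b c : ℝ}

@[simp]
theorem self (I : ℝ → ℝ) (a : ℝ) : fisherKL I a a = 0 := intervalIntegral.integral_same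

theorem nonneg (hI : ∀ u ∈ uIcc a b, 0 ≤ I u) : 0 ≤ fisherKL I a b := by
  rcases le_total a b with hab | hba
  · rw [uIcc_of_le hab] at hI
    exact intervalIntegral.integral_nonneg hab fun u hu =>
      mul_nonneg (sub_nonneg.2 hu.1) (hI u hu)
  · rw [uIcc_of_ge hba] at hI
    rw [fisherKL, intervalIntegral.integral_symm, ← intervalIntegral.integral_neg]
    refine intervalIntegral.integral_nonneg hba fun u hu => ?_
    nlinarith [hu.2, hI u hu]

theorem add_adjacent_intervals (hac : IntervalIntegrable I volume a c)
    (hcb : IntervalIntegrable I volume c b) :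
    fisherKL I a c + fisherKL I c b + (c - a) * ∫ u in c..b, I u = fisherKL I a b := by
  have hmul : ∀ {x y : ℝ} (d : ℝ), IntervalIntegrable I volume x y →
      IntervalIntegrable (fun u => (u - d) * I u) volume x y := fun d h =>
    h.continuousOn_mul (continuousOn_id.sub continuousOn_const)
  have hsplit : ∫ u in c..b, (u - a) * I u
      = fisherKL I c b + (c - a) * ∫ u in c..b, I u := by
    have hpt : ∀ u, (u - a) * I u = (u - c) * I u + (c - a) * I u := fun u => by ring
    simp_rw [hpt]
    rw [intervalIntegral.integral_add (hmul c hcb) (hcb.const_mul _),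
      intervalIntegral.integral_const_mul, fisherKL]
  rw [fisherKL.eq_1 I a b,
    ← intervalIntegral.integral_add_adjacent_intervals (hmul a hac) (hmul a hcb), hsplit,
    fisherKL.eq_1 I a c, add_assoc]

theorem le_of_mem_uIcc (hI0 : ∀ u ∈ uIcc a b, 0 ≤ I u) (hI : IntervalIntegrable I volume a b)
    (hc : c ∈ uIcc a b) : fisherKL I c b ≤ fisherKL I a b := by
  have hcross : 0 ≤ (c - a) * ∫ u in c..b, I u := by
    rcases le_total a b with hab | hba
    · rw [uIcc_of_le hab] at hI0 hc
      exact mul_nonneg (sub_nonneg.2 hc.1) (intervalIntegral.integral_nonneg hc.2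
        fun u hu => hI0 u ⟨hc.1.trans hu.1, hu.2⟩)
    · rw [uIcc_of_ge hba] at hI0 hc
      refine mul_nonneg_of_nonpos_of_nonpos (sub_nonpos.2 hc.2) ?_
      rw [intervalIntegral.integral_symm, neg_nonpos]
      exact intervalIntegral.integral_nonneg hc.1 fun u hu => hI0 u ⟨hu.1, hu.2.trans hc.2⟩
  rw [← add_adjacent_intervals (hI.mono_set (uIcc_subset_uIcc_left hc))
    (hI.mono_set (uIcc_subset_uIcc_right hc))]
  linarith [nonneg fun u hu => hI0 u (uIcc_subset_uIcc_left hc hu)]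

end fisherKL

theorem mul_fisherKL_combo_le {I : ℝ → ℝ} {p q γ N z : ℝ} (hI0 : ∀ u ∈ uIcc q p, 0 ≤ I u)
    (hI : IntervalIntegrable I volume q p) (hγ : γ ∈ Icc (0 : ℝ) 1) (hN : 0 ≤ N) (hz : 0 ≤ z)
    (hstep : 0 < γ → N * fisherKL I q p ≤ z) :
    N * fisherKL I (γ * q + (1 - γ) * p) p ≤ z := by
  rcases hγ.1.eq_or_lt with rfl | hγpos
  · simpa using hz
  have hmem : γ * q + (1 - γ) * p ∈ uIcc q p := by
    simpa using convex_uIcc q p left_mem_uIcc right_mem_uIcc hγ.1 (sub_nonneg.2 hγ.2)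
      (add_sub_cancel γ 1)
  calc N * fisherKL I (γ * q + (1 - γ) * p) p ≤ N * fisherKL I q p :=
        mul_le_mul_of_nonneg_left (fisherKL.le_of_mem_uIcc hI0 hI hmem) hN
    _ ≤ z := hstep hγpos

/-- The SSA update `θ̂⁽ᵏ⁾` from `p = θ̂⁽ᵏ⁻¹⁾`, weak estimate `q = θ̃⁽ᵏ⁾`, `N = N_k`, `z = z_k`. -/
noncomputable def ssaUpdate (I Kag : ℝ → ℝ) (N z q p : ℝ) : ℝ :=
  Kag (N * fisherKL I q p / z) * q + (1 - Kag (N * fisherKL I q p / z)) * p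

theorem ssaUpdate_mem_and_le {Θ : Set ℝ} {I Kag : ℝ → ℝ} {p q N z : ℝ} (hΘ : Convex ℝ Θ)
    (hIcont : ContinuousOn I Θ) (hI0 : ∀ u ∈ Θ, 0 ≤ I u)
    (hKag01 : ∀ t, 0 ≤ t → Kag t ∈ Icc (0 : ℝ) 1) (hKag0 : ∀ t, 1 ≤ t → Kag t = 0)
    (hq : q ∈ Θ) (hp : p ∈ Θ) (hN : 0 ≤ N) (hz : 0 < z) :
    ssaUpdate I Kag N z q p ∈ Θ ∧ N * fisherKL I (ssaUpdate I Kag N z q p) p ≤ z := by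
  have hsub : uIcc q p ⊆ Θ := hΘ.ordConnected.uIcc_subset hq hp
  have hγ := hKag01 _ (div_nonneg (mul_nonneg hN (fisherKL.nonneg fun u hu => hI0 u (hsub hu)))
    hz.le)
  unfold ssaUpdate
  refine ⟨by simpa using hΘ hq hp hγ.1 (sub_nonneg.2 hγ.2) (add_sub_cancel _ 1), ?_⟩
  refine mul_fisherKL_combo_le (fun u hu => hI0 u (hsub hu))
    (hIcont.mono hsub).intervalIntegrable hγ hN hz.le fun hpos => ?_
  have hlt : N * fisherKL I q p / z < 1 := by
    by_contra! hge
    exact hpos.ne' (hKag0 _ hge)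
  exact ((div_lt_one hz).1 hlt).le

theorem ssa_step_stability_general
    (Θ : Set ℝ) (hΘconv : Convex ℝ Θ)
    (I : ℝ → ℝ) (hIcont : ContinuousOn I Θ) (hIpos : ∀ u ∈ Θ, 0 < I u)
    (K : ℝ → ℝ → ℝ) (hK : ∀ a b, K a b = ∫ u in a..b, (u - a) * I u)
    (Kc : ℕ)
    (θtil : ℕ → ℝ) (hθtil : ∀ k, 1 ≤ k → k ≤ Kc → θtil k ∈ Θ)
    (N : ℕ → ℝ) (hN : ∀ k, 1 ≤ k → k ≤ Kc → 0 < N k)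
    (z : ℕ → ℝ) (hz : ∀ k, 2 ≤ k → k ≤ Kc → 0 < z k)
    (Kag : ℝ → ℝ) (hKag01 : ∀ t, 0 ≤ t → Kag t ∈ Set.Icc (0 : ℝ) 1)
    (hKag0 : ∀ t, 1 ≤ t → Kag t = 0)
    (θhat : ℕ → ℝ) (hθhat1 : θhat 1 = θtil 1)
    (hθhatrec : ∀ k, 2 ≤ k → k ≤ Kc →
      θhat k = Kag (N k * K (θtil k) (θhat (k - 1)) / z k) * θtil k
        + (1 - Kag (N k * K (θtil k) (θhat (k - 1)) / z k)) * θhat (k - 1)) :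
    ∀ k, 2 ≤ k → k ≤ Kc → N k * K (θhat k) (θhat (k - 1)) ≤ z k := by
  obtain rfl : K = fisherKL I := funext₂ hK
  have step : ∀ k, 2 ≤ k → k ≤ Kc → θhat (k - 1) ∈ Θ →
      θhat k ∈ Θ ∧ N k * fisherKL I (θhat k) (θhat (k - 1)) ≤ z k := by
    intro k hk2 hkKc hprev
    rw [hθhatrec k hk2 hkKc]
    exact ssaUpdate_mem_and_le hΘconv hIcont (fun u hu => (hIpos u hu).le) hKag01 hKag0
      (hθtil k (by omega) hkKc) hprev (hN k (by omega) hkKc).le (hz k hk2 hkKc)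
  have hmem : ∀ k, 1 ≤ k → k ≤ Kc → θhat k ∈ Θ := by
    intro k hk
    induction k, hk using Nat.le_induction with
    | base => exact fun h1 => hθhat1 ▸ hθtil 1 le_rfl h1
    | succ n hn ih => exact fun hle => (step (n + 1) (by omega) hle (ih (by omega))).1
  exact fun k hk2 hkKc => (step k hk2 hkKc (hmem (k - 1) (by omega) (by omega))).2

/-- stability of the SSA recursion at every step
(inequality (5.1) of Theorem 5.3). -/
theorem ssa_step_stability
    (Θ : Set ℝ) (hΘconv : Convex ℝ Θ) (κ : ℝ) (hκ : 1 ≤ κ)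
    (I : ℝ → ℝ) (hIcont : ContinuousOn I Θ) (hIpos : ∀ u ∈ Θ, 0 < I u)
    (hIκ : ∀ u ∈ Θ, ∀ v ∈ Θ, Real.sqrt (I u / I v) ≤ κ)
    (K : ℝ → ℝ → ℝ) (hK : ∀ a b, K a b = ∫ u in a..b, (u - a) * I u)
    (Kc : ℕ) (hKc : 1 ≤ Kc)
    (θtil : ℕ → ℝ) (hθtil : ∀ k, 1 ≤ k → k ≤ Kc → θtil k ∈ Θ)
    (N : ℕ → ℝ) (hN : ∀ k, 1 ≤ k → k ≤ Kc → 0 < N k)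
    (z : ℕ → ℝ) (hz : ∀ k, 2 ≤ k → k ≤ Kc → 0 < z k)
    (Kag : ℝ → ℝ) (hKag01 : ∀ t, 0 ≤ t → Kag t ∈ Set.Icc (0 : ℝ) 1)
    (hKagmono : AntitoneOn Kag (Set.Ici 0))
    (hKag0 : ∀ t, 1 ≤ t → Kag t = 0)
    (θhat : ℕ → ℝ) (hθhat1 : θhat 1 = θtil 1)
    (hθhatrec : ∀ k, 2 ≤ k → k ≤ Kc →
      θhat k = Kag (N k * K (θtil k) (θhat (k - 1)) / z k) * θtil k
        + (1 - Kag (N k * K (θtil k) (θhat (k - 1)) / z k)) * θhat (k - 1)) :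
    ∀ k, 2 ≤ k → k ≤ Kc → N k * K (θhat k) (θhat (k - 1)) ≤ z k :=
  ssa_step_stability_general Θ hΘconv I hIcont hIpos K hK Kc θtil hθtil N hN z hz Kag hKag01 hKag0
    θhat hθhat1 hθhatrec
end
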